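/- (Sublinear convergence rate.) Suppose W satisfies w_{ij} = 1 for all j ≥ i, U := W − euᵀ is symmetric for some u ∈ ℝ^m, β ≥ ρ > 0, α ≥ 1, P̂ := P − D_Hᵀ((W − euᵀ + αuuᵀ) ⊗ I)D_H − β D_Aᵀ((W − euᵀ + αuuᵀ) ⊗ I)D_A is positive semidefinite, the sequence {(x^k, λ^k)}_{k≥1} is generated by the algorithm with λ^1 = 0, and (x*, λ*) satisfies the KKT conditions. Let x̄^{t+1} := (1/t) Σ_{k=1}^t x^{k+1} and C := (1/ρ) max{(1 + ‖λ*‖)², 4‖λ*‖²} + ‖x^1 − x*‖_P² − ‖y^1 − y*‖_V² − β‖z^1 − z*‖_V². Then for every t ≥ 1: |F(x̄^{t+1}) − F(x*)| ≤ C/(2t) and ‖Ax̄^{t+1} − b‖ ≤ C/(2t). -/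

import Mathlib

open Matrix Finset Filter Topology

/-!
Each sweep is a proximal step on every block, so the three-point inequality for the convex `g_i`
holds blockwise. Summed over the blocks, the Jacobi/Gauss–Seidel mixing enters through
`Σᵢ ⟨Σⱼ w_{ij} d_j, a_i⟩`, which the symmetry of `U = W - euᵀ` turns into differences of `‖·‖_V²`
plus a rank-one cross term; Young's inequality and `P̂ ⪰ 0` absorb the remainders. With the dual
update this shows that, for every `λ`, the Lagrangian gap `F(x^{k+1}) - F(x*) - ⟨λ, Ax^{k+1} - b⟩`
is at most half the decrease of a nonnegative potential `Φ_k(λ)`. Telescoping and Jensen bound the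
gap at the average `x̄` by `Φ_1(λ)/(2t)`; the choices `λ = 0` and `λ = -c (Ax̄ - b)/‖Ax̄ - b‖` with
`c = 1 + ‖λ*‖` or `c = 2‖λ*‖`, together with the KKT bound `F(x̄) - F(x*) ≥ -‖λ*‖‖Ax̄ - b‖`, give
both estimates.
-/

/-- For a block matrix `M = (M_1,…,M_m)` and a block vector `x = (x_1,…,x_m)`,
`blkMulVec M x = Σ_i M_i x_i` (i.e. `Mx` for the concatenated matrix/vector). -/
noncomputable def blkMulVec {m r : ℕ} {n : Fin m → ℕ}
    (M : ∀ i : Fin m, Matrix (Fin r) (Fin (n i)) ℝ)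
    (x : ∀ i : Fin m, Fin (n i) → ℝ) : Fin r → ℝ :=
  ∑ i, M i *ᵥ x i

/-- The objective `F(x) = (1/2) xᵀQx + Σ_i g_i(x_i)` where `Q = HᵀH`,
so `F(x) = (1/2)‖Hx‖² + Σ_i g_i(x_i)`. -/
noncomputable def Fobj {m q : ℕ} {n : Fin m → ℕ}
    (H : ∀ i : Fin m, Matrix (Fin q) (Fin (n i)) ℝ)
    (g : ∀ i : Fin m, (Fin (n i) → ℝ) → ℝ)
    (x : ∀ i : Fin m, Fin (n i) → ℝ) : ℝ :=
  (1 / 2) * (blkMulVec H x ⬝ᵥ blkMulVec H x) + ∑ i, g i (x i)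

/-- `‖x‖_P²` for the block-diagonal matrix `P = blkdiag(P_1,…,P_m)`:
`‖x‖_P² = Σ_i x_iᵀ P_i x_i`. -/
noncomputable def normPSq {m : ℕ} {n : Fin m → ℕ}
    (P : ∀ i : Fin m, Matrix (Fin (n i)) (Fin (n i)) ℝ)
    (x : ∀ i : Fin m, Fin (n i) → ℝ) : ℝ :=
  ∑ i, x i ⬝ᵥ (P i *ᵥ x i)

/-- `‖y‖_V²` for a block vector `y = (y_1,…,y_m)`, where `V = U ⊗ I` with
`U := W − euᵀ` (so `U_{ij} = W_{ij} − u_j`): `‖y‖_V² = Σ_{i,j} U_{ij} ⟨y_i, y_j⟩`. -/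
noncomputable def normVSq {m r : ℕ} (W : Matrix (Fin m) (Fin m) ℝ) (u : Fin m → ℝ)
    (y : Fin m → Fin r → ℝ) : ℝ :=
  ∑ i, ∑ j, (W i j - u j) * (y i ⬝ᵥ y j)

/-- The quadratic form `v ↦ vᵀ D_Bᵀ (M ⊗ I) D_B v = Σ_{i,j} M_{ij} ⟨B_i v_i, B_j v_j⟩`
for a block-diagonal matrix `D_B = blkdiag(B_1,…,B_m)` and `M ∈ ℝ^{m×m}`. -/
noncomputable def quadKron {m r : ℕ} {n : Fin m → ℕ} (M : Matrix (Fin m) (Fin m) ℝ)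
    (B : ∀ i : Fin m, Matrix (Fin r) (Fin (n i)) ℝ)
    (v : ∀ i : Fin m, Fin (n i) → ℝ) : ℝ :=
  ∑ i, ∑ j, M i j * ((B i *ᵥ v i) ⬝ᵥ (B j *ᵥ v j))

/-- The point `x̂^{k,i}` with blocks `x̂_j^{k,i} = x_j^{k+1} − w_{ij}(x_j^{k+1} − x_j^k)`. -/
noncomputable def xhat {m : ℕ} {n : Fin m → ℕ} (W : Matrix (Fin m) (Fin m) ℝ)
    (xk xk1 : ∀ i : Fin m, Fin (n i) → ℝ) (i : Fin m) :
    ∀ j : Fin m, Fin (n j) → ℝ :=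
  fun j => xk1 j - W i j • (xk1 j - xk j)

/-- One iteration of the hybrid Jacobian/Gauss-Seidel proximal BCU method:
for each `i`, `x_i^{k+1}` minimizes
`⟨∇_i f(x̂^{k,i}) − A_iᵀ(λ^k − β(Ax̂^{k,i} − b)), x_i⟩ + g_i(x_i) + (1/2)‖x_i − x_i^k‖_{P_i}²`
(where `f(x) = (1/2)‖Hx‖²`, so `∇_i f(x̂) = H_iᵀ(Hx̂)`), and
`λ^{k+1} = λ^k − ρ(Ax^{k+1} − b)`. -/
noncomputable def Iter {m q p : ℕ} {n : Fin m → ℕ}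
    (H : ∀ i : Fin m, Matrix (Fin q) (Fin (n i)) ℝ)
    (A : ∀ i : Fin m, Matrix (Fin p) (Fin (n i)) ℝ)
    (b : Fin p → ℝ)
    (g : ∀ i : Fin m, (Fin (n i) → ℝ) → ℝ)
    (P : ∀ i : Fin m, Matrix (Fin (n i)) (Fin (n i)) ℝ)
    (W : Matrix (Fin m) (Fin m) ℝ)
    (β ρ : ℝ)
    (xk xk1 : ∀ i : Fin m, Fin (n i) → ℝ)
    (lamk lamk1 : Fin p → ℝ) : Prop :=
  (∀ i : Fin m, ∀ ξ : Fin (n i) → ℝ,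
      ((H i)ᵀ *ᵥ blkMulVec H (xhat W xk xk1 i)
          - (A i)ᵀ *ᵥ (lamk - β • (blkMulVec A (xhat W xk xk1 i) - b))) ⬝ᵥ xk1 i
        + g i (xk1 i)
        + (1 / 2) * ((xk1 i - xk i) ⬝ᵥ (P i *ᵥ (xk1 i - xk i)))
      ≤ ((H i)ᵀ *ᵥ blkMulVec H (xhat W xk xk1 i)
          - (A i)ᵀ *ᵥ (lamk - β • (blkMulVec A (xhat W xk xk1 i) - b))) ⬝ᵥ ξ
        + g i ξ
        + (1 / 2) * ((ξ - xk i) ⬝ᵥ (P i *ᵥ (ξ - xk i))))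
  ∧ lamk1 = lamk - ρ • (blkMulVec A xk1 - b)

/-- Euclidean norm of a vector. -/
noncomputable def enormE {r : ℕ} (v : Fin r → ℝ) : ℝ := Real.sqrt (v ⬝ᵥ v)

section DotProduct

variable {ι : Type*} [Fintype ι]

lemma dotProduct_self_nonneg (v : ι → ℝ) : 0 ≤ v ⬝ᵥ v :=
  dotProduct_star_self_nonneg v

lemma two_mul_dotProduct_le (v w : ι → ℝ) : 2 * (v ⬝ᵥ w) ≤ v ⬝ᵥ v + w ⬝ᵥ w := by
  have h := dotProduct_self_nonneg (v - w)
  simp only [sub_dotProduct, dotProduct_sub, dotProduct_comm w v] at h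
  linarith

lemma enormE_sq {r : ℕ} (v : Fin r → ℝ) : enormE v ^ 2 = v ⬝ᵥ v :=
  Real.sq_sqrt (dotProduct_self_nonneg v)

lemma neg_enormE_mul_le_dotProduct {r : ℕ} (v w : Fin r → ℝ) :
    -(enormE v * enormE w) ≤ v ⬝ᵥ w := by
  have h := Real.sum_mul_le_sqrt_mul_sqrt univ (-v) w
  simp only [Pi.neg_apply, neg_mul, Finset.sum_neg_distrib, neg_sq] at h
  simp only [enormE, dotProduct, ← sq]
  linarith

lemma dotProduct_mulVec_lineMap {r : ℕ} (P : Matrix (Fin r) (Fin r) ℝ) (a b : Fin r → ℝ) (θ : ℝ) :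
    ((1 - θ) • a + θ • b) ⬝ᵥ (P *ᵥ ((1 - θ) • a + θ • b))
      = (1 - θ) * (a ⬝ᵥ (P *ᵥ a)) + θ * (b ⬝ᵥ (P *ᵥ b))
        - θ * (1 - θ) * ((a - b) ⬝ᵥ (P *ᵥ (a - b))) := by
  simp only [mulVec_add, mulVec_sub, mulVec_smul, add_dotProduct, sub_dotProduct,
    dotProduct_add, dotProduct_sub, smul_dotProduct, dotProduct_smul, smul_eq_mul]
  ring

lemma dotProduct_eq_dual_update {ρ : ℝ} (hρ : ρ ≠ 0) (lam lamh v : ι → ℝ) :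
    lam ⬝ᵥ v = lamh ⬝ᵥ v
      + (1 / ρ * ((lam - lamh) ⬝ᵥ (lam - lamh))
        - 1 / ρ * ((lam - ρ • v - lamh) ⬝ᵥ (lam - ρ • v - lamh))) / 2
      + ρ / 2 * (v ⬝ᵥ v) := by
  simp only [sub_dotProduct, dotProduct_sub, smul_dotProduct, dotProduct_smul, smul_eq_mul]
  rw [dotProduct_comm lamh lam, dotProduct_comm v lam, dotProduct_comm v lamh]
  field_simp
  ring

end DotProduct

lemma convexOn_fun_sum {ι E : Type*} [AddCommGroup E] [Module ℝ E] {s : Set E}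
    (hs : Convex ℝ s) (t : Finset ι) {f : ι → E → ℝ} (hf : ∀ i ∈ t, ConvexOn ℝ s (f i)) :
    ConvexOn ℝ s (fun x => ∑ i ∈ t, f i x) := by
  have h := Finset.sum_induction f (ConvexOn ℝ s) (fun _ _ => ConvexOn.add)
    (convexOn_const 0 hs) hf
  rwa [Finset.sum_fn] at h

lemma convexOn_dotProduct_self {ι : Type*} [Fintype ι] :
    ConvexOn ℝ Set.univ (fun v : ι → ℝ => v ⬝ᵥ v) := by
  simp only [dotProduct, ← sq]
  refine convexOn_fun_sum convex_univ univ fun i _ => ?_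
  have h := (Even.convexOn_pow (𝕜 := ℝ) even_two).comp_linearMap
    (LinearMap.proj (R := ℝ) (φ := fun _ : ι => ℝ) i)
  exact h

section Blocks

variable {m r : ℕ} {n : Fin m → ℕ}

/-- The block vector `D_B x = (B_1 x_1, …, B_m x_m)`; the paper's `y = D_H x` and `z = D_A x`. -/
def blkDiagMulVec (B : ∀ i : Fin m, Matrix (Fin r) (Fin (n i)) ℝ)
    (x : ∀ i : Fin m, Fin (n i) → ℝ) : Fin m → Fin r → ℝ :=
  fun i => B i *ᵥ x i

variable (B : ∀ i : Fin m, Matrix (Fin r) (Fin (n i)) ℝ)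

lemma blkDiagMulVec_sub (x y : ∀ i : Fin m, Fin (n i) → ℝ) :
    blkDiagMulVec B (x - y) = blkDiagMulVec B x - blkDiagMulVec B y :=
  funext fun i => mulVec_sub (B i) (x i) (y i)

lemma blkMulVec_sub (x y : ∀ i : Fin m, Fin (n i) → ℝ) :
    blkMulVec B (x - y) = blkMulVec B x - blkMulVec B y := by
  simp only [blkMulVec, Pi.sub_apply, mulVec_sub, Finset.sum_sub_distrib]

lemma sum_transpose_mulVec_dotProduct_sub (w : Fin r → ℝ) (x y : ∀ i : Fin m, Fin (n i) → ℝ) :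
    ∑ i, ((B i)ᵀ *ᵥ w) ⬝ᵥ (x i - y i) = w ⬝ᵥ (blkMulVec B x - blkMulVec B y) := by
  rw [← blkMulVec_sub, blkMulVec, dotProduct_sum]
  simp only [mulVec_transpose, dotProduct_mulVec, Pi.sub_apply]

lemma blkMulVec_xhat (W : Matrix (Fin m) (Fin m) ℝ) (x₀ x₁ : ∀ i : Fin m, Fin (n i) → ℝ)
    (i : Fin m) :
    blkMulVec B (xhat W x₀ x₁ i)
      = blkMulVec B x₁ - ∑ j, W i j • blkDiagMulVec B (x₁ - x₀) j := by
  simp only [blkMulVec, xhat, blkDiagMulVec, Pi.sub_apply, mulVec_sub, mulVec_smul,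
    ← Finset.sum_sub_distrib]

def blkMulVecLin : (∀ i : Fin m, Fin (n i) → ℝ) →ₗ[ℝ] Fin r → ℝ :=
  ∑ i, (B i).mulVecLin ∘ₗ LinearMap.proj i

lemma blkMulVecLin_apply (x : ∀ i : Fin m, Fin (n i) → ℝ) :
    blkMulVecLin B x = blkMulVec B x := by
  simp [blkMulVecLin, blkMulVec]

lemma Fobj_sub_Fobj (g : ∀ i : Fin m, (Fin (n i) → ℝ) → ℝ) (x y : ∀ i : Fin m, Fin (n i) → ℝ) :
    Fobj B g x - Fobj B g y
      = blkMulVec B x ⬝ᵥ blkMulVec B (x - y) - blkMulVec B (x - y) ⬝ᵥ blkMulVec B (x - y) / 2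
        + (∑ i, g i (x i) - ∑ i, g i (y i)) := by
  simp only [Fobj, blkMulVec_sub, dotProduct_sub, sub_dotProduct, dotProduct_comm (blkMulVec B y)]
  ring

end Blocks

section VNorm

variable {m r : ℕ} (W : Matrix (Fin m) (Fin m) ℝ) (u : Fin m → ℝ)

lemma dotProduct_self_sum_smul (y : Fin m → Fin r → ℝ) :
    (∑ j, u j • y j) ⬝ᵥ (∑ j, u j • y j) = ∑ i, ∑ j, u i * u j * (y i ⬝ᵥ y j) := by
  simp only [sum_dotProduct, dotProduct_sum, smul_dotProduct, dotProduct_smul, smul_eq_mul,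
    Finset.mul_sum]
  exact Finset.sum_congr rfl fun i _ => Finset.sum_congr rfl fun j _ => by
    rw [dotProduct_comm (y j)]; ring

/-- Polarization identity for `‖·‖_V`, plus the `euᵀ` part of `W`. -/
lemma sum_smul_sum_dotProduct_eq (hU : ∀ i j : Fin m, W i j - u j = W j i - u i)
    (d a : Fin m → Fin r → ℝ) :
    ∑ i, (∑ j, W i j • d j) ⬝ᵥ a i
      = (normVSq W u a + normVSq W u d - normVSq W u (a - d)) / 2
        + (∑ j, u j • d j) ⬝ᵥ ∑ i, a i := by
  have hsym : ∑ i, ∑ j, (W i j - u j) * (d i ⬝ᵥ a j)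
      = ∑ i, ∑ j, (W i j - u j) * (d j ⬝ᵥ a i) := by
    rw [Finset.sum_comm]
    simp only [hU]
  simp only [normVSq, Pi.sub_apply, sub_dotProduct, dotProduct_sub, sum_dotProduct,
    dotProduct_sum, smul_dotProduct, smul_eq_mul, mul_sub, Finset.sum_sub_distrib,
    dotProduct_comm (a _) (d _)] at hsym ⊢
  rw [hsym]
  simp only [sub_mul, Finset.sum_sub_distrib]
  ring

lemma quadKron_eq (a : ℝ) {n : Fin m → ℕ} (B : ∀ i : Fin m, Matrix (Fin r) (Fin (n i)) ℝ)
    (v : ∀ i : Fin m, Fin (n i) → ℝ) :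
    quadKron (fun i j => W i j - u j + a * (u i * u j)) B v
      = normVSq W u (blkDiagMulVec B v)
        + a * ((∑ j, u j • blkDiagMulVec B v j) ⬝ᵥ (∑ j, u j • blkDiagMulVec B v j)) := by
  simp only [quadKron, normVSq, dotProduct_self_sum_smul, Finset.mul_sum, ← Finset.sum_add_distrib]
  exact Finset.sum_congr rfl fun i _ => Finset.sum_congr rfl fun j _ => by
    simp only [blkDiagMulVec]; ring

end VNorm

/-- On the segment from `x₁` to `z` the proximal objective `φ` lies below its chord by
`½θ(1-θ)‖x₁ - z‖²_P`; minimality of `x₁` and `θ → 0` give `φ x₁ + ½‖x₁ - z‖²_P ≤ φ z`. -/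
lemma prox_three_point {r : ℕ} {g : (Fin r → ℝ) → ℝ} (hg : ConvexOn ℝ Set.univ g)
    {P : Matrix (Fin r) (Fin r) ℝ} {s x₀ x₁ : Fin r → ℝ}
    (hmin : ∀ ξ, s ⬝ᵥ x₁ + g x₁ + 1 / 2 * ((x₁ - x₀) ⬝ᵥ (P *ᵥ (x₁ - x₀)))
      ≤ s ⬝ᵥ ξ + g ξ + 1 / 2 * ((ξ - x₀) ⬝ᵥ (P *ᵥ (ξ - x₀))))
    (z : Fin r → ℝ) :
    g x₁ - g z + s ⬝ᵥ (x₁ - z)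
      ≤ (x₀ - z) ⬝ᵥ (P *ᵥ (x₀ - z)) / 2 - (x₁ - z) ⬝ᵥ (P *ᵥ (x₁ - z)) / 2
        - (x₁ - x₀) ⬝ᵥ (P *ᵥ (x₁ - x₀)) / 2 := by
  set Q : (Fin r → ℝ) → ℝ := fun v => v ⬝ᵥ (P *ᵥ v) with hQ
  set φ : (Fin r → ℝ) → ℝ := fun ξ => s ⬝ᵥ ξ + g ξ + 1 / 2 * Q (ξ - x₀)
  have hstrong : ∀ θ ∈ Set.Ioo (0 : ℝ) 1, φ x₁ + (1 - θ) * (Q (x₁ - z) / 2) ≤ φ z := by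
    rintro θ ⟨hθ0, hθ1⟩
    have hseg : (1 - θ) • x₁ + θ • z - x₀ = (1 - θ) • (x₁ - x₀) + θ • (z - x₀) := by module
    have hg' := hg.2 (Set.mem_univ x₁) (Set.mem_univ z) (show (0 : ℝ) ≤ 1 - θ by linarith)
      hθ0.le (by ring)
    have hQseg := dotProduct_mulVec_lineMap P (x₁ - x₀) (z - x₀) θ
    rw [← hseg, show x₁ - x₀ - (z - x₀) = x₁ - z by abel] at hQseg
    have h := hmin ((1 - θ) • x₁ + θ • z)
    simp only [dotProduct_add, dotProduct_smul, smul_eq_mul] at h hg'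
    have : θ * (φ x₁ + (1 - θ) * (Q (x₁ - z) / 2)) ≤ θ * φ z := by
      simp only [φ, hQ]; linarith
    exact le_of_mul_le_mul_left this hθ0
  have hlim : Tendsto (fun θ : ℝ => φ x₁ + (1 - θ) * (Q (x₁ - z) / 2)) (𝓝[>] 0)
      (𝓝 (φ x₁ + Q (x₁ - z) / 2)) := by
    have h : Continuous fun θ : ℝ => φ x₁ + (1 - θ) * (Q (x₁ - z) / 2) := by fun_prop
    simpa using (h.tendsto 0).mono_left nhdsWithin_le_nhds
  have hmain := le_of_tendsto hlim (eventually_of_mem (Ioo_mem_nhdsGT zero_lt_one) hstrong)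
  have hz : Q (z - x₀) = Q (x₀ - z) := by
    simp only [hQ, ← neg_sub x₀ z, mulVec_neg, neg_dotProduct, dotProduct_neg, neg_neg]
  simp only [φ] at hmain
  rw [hz] at hmain
  simp only [hQ] at hmain
  rw [dotProduct_sub]
  linarith

section Iteration

variable {m q p : ℕ} {n : Fin m → ℕ} (W : Matrix (Fin m) (Fin m) ℝ) (u : Fin m → ℝ)

/-- The coupling term of one sweep (`x₀ = x^k`, `x₁ = x^{k+1}`); the cross term left by the
polarization identity is split by Young's inequality. -/
lemma sum_transpose_mulVec_xhat_dotProduct_ge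
    (hU : ∀ i j : Fin m, W i j - u j = W j i - u i) {r : ℕ}
    (B : ∀ i : Fin m, Matrix (Fin r) (Fin (n i)) ℝ) (c : Fin r → ℝ)
    (x₀ x₁ x : ∀ i : Fin m, Fin (n i) → ℝ) :
    (blkMulVec B x₁ - c) ⬝ᵥ blkMulVec B (x₁ - x)
        - blkMulVec B (x₁ - x) ⬝ᵥ blkMulVec B (x₁ - x) / 2
        + normVSq W u (blkDiagMulVec B (x₀ - x)) / 2
        - normVSq W u (blkDiagMulVec B (x₁ - x)) / 2
        - (normVSq W u (blkDiagMulVec B (x₁ - x₀))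
            + (∑ j, u j • blkDiagMulVec B (x₁ - x₀) j)
              ⬝ᵥ (∑ j, u j • blkDiagMulVec B (x₁ - x₀) j)) / 2
      ≤ ∑ i, ((B i)ᵀ *ᵥ (blkMulVec B (xhat W x₀ x₁ i) - c)) ⬝ᵥ (x₁ i - x i) := by
  set d := blkDiagMulVec B (x₁ - x₀)
  set a := blkDiagMulVec B (x₁ - x)
  have hsum : ∑ i, ((B i)ᵀ *ᵥ (blkMulVec B (xhat W x₀ x₁ i) - c)) ⬝ᵥ (x₁ i - x i)
      = (blkMulVec B x₁ - c) ⬝ᵥ ∑ i, a i - ∑ i, (∑ j, W i j • d j) ⬝ᵥ a i := by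
    simp only [mulVec_transpose, ← dotProduct_mulVec, blkMulVec_xhat, dotProduct_sum,
      ← Finset.sum_sub_distrib]
    refine Finset.sum_congr rfl fun i _ => ?_
    rw [show blkMulVec B x₁ - ∑ j, W i j • d j - c = blkMulVec B x₁ - c - ∑ j, W i j • d j by
      abel, sub_dotProduct]
    rfl
  have had : a - d = blkDiagMulVec B (x₀ - x) := by
    rw [← blkDiagMulVec_sub, sub_sub_sub_cancel_left]
  have hBa : ∑ i, a i = blkMulVec B (x₁ - x) := rfl
  have hYoung := two_mul_dotProduct_le (∑ j, u j • d j) (blkMulVec B (x₁ - x))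
  rw [hsum, sum_smul_sum_dotProduct_eq W u hU, had, hBa]
  linarith

variable (H : ∀ i : Fin m, Matrix (Fin q) (Fin (n i)) ℝ)
  (A : ∀ i : Fin m, Matrix (Fin p) (Fin (n i)) ℝ)
  (P : ∀ i : Fin m, Matrix (Fin (n i)) (Fin (n i)) ℝ) (β : ℝ)

noncomputable def primalEnergy (v : ∀ i : Fin m, Fin (n i) → ℝ) : ℝ :=
  normPSq P v - normVSq W u (blkDiagMulVec H v) - β * normVSq W u (blkDiagMulVec A v)

noncomputable def lyapunov (ρ : ℝ) (xs : ∀ i : Fin m, Fin (n i) → ℝ) (lamh : Fin p → ℝ)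
    (x : ∀ i : Fin m, Fin (n i) → ℝ) (lam : Fin p → ℝ) : ℝ :=
  primalEnergy W u H A P β (x - xs) + 1 / ρ * ((lam - lamh) ⬝ᵥ (lam - lamh))

/-- `P̂ = P - D_Hᵀ((U + αuuᵀ) ⊗ I)D_H - β D_Aᵀ((U + αuuᵀ) ⊗ I)D_A ⪰ 0`. -/
def PhatNonneg (α : ℝ) : Prop :=
  ∀ v : ∀ i : Fin m, Fin (n i) → ℝ,
    0 ≤ normPSq P v - quadKron (fun i j => W i j - u j + α * (u i * u j)) H v
      - β * quadKron (fun i j => W i j - u j + α * (u i * u j)) A v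

variable {W u H A P β}

lemma normVSq_add_le_normPSq {α : ℝ} (hβ : 0 ≤ β) (hα : 1 ≤ α)
    (hPhat : PhatNonneg W u H A P β α)
    (v : ∀ i : Fin m, Fin (n i) → ℝ) :
    normVSq W u (blkDiagMulVec H v)
        + (∑ j, u j • blkDiagMulVec H v j) ⬝ᵥ (∑ j, u j • blkDiagMulVec H v j)
        + β * (normVSq W u (blkDiagMulVec A v)
          + (∑ j, u j • blkDiagMulVec A v j) ⬝ᵥ (∑ j, u j • blkDiagMulVec A v j))
      ≤ normPSq P v := by
  have h := hPhat v
  rw [quadKron_eq, quadKron_eq] at h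
  have hH := dotProduct_self_nonneg (∑ j, u j • blkDiagMulVec H v j)
  have hA := dotProduct_self_nonneg (∑ j, u j • blkDiagMulVec A v j)
  nlinarith [mul_nonneg hβ (mul_nonneg (sub_nonneg.2 hα) hA)]

lemma primalEnergy_nonneg {α : ℝ} (hβ : 0 ≤ β) (hα : 1 ≤ α)
    (hPhat : PhatNonneg W u H A P β α)
    (v : ∀ i : Fin m, Fin (n i) → ℝ) :
    0 ≤ primalEnergy W u H A P β v := by
  have h := normVSq_add_le_normPSq hβ hα hPhat v
  have hH := dotProduct_self_nonneg (∑ j, u j • blkDiagMulVec H v j)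
  have hA := mul_nonneg hβ (dotProduct_self_nonneg (∑ j, u j • blkDiagMulVec A v j))
  rw [primalEnergy]
  linarith

lemma lyapunov_nonneg {α ρ : ℝ} (hβ : 0 ≤ β) (hα : 1 ≤ α) (hρ : 0 ≤ ρ)
    (hPhat : PhatNonneg W u H A P β α)
    (xs : ∀ i : Fin m, Fin (n i) → ℝ) (lamh : Fin p → ℝ)
    (x : ∀ i : Fin m, Fin (n i) → ℝ) (lam : Fin p → ℝ) :
    0 ≤ lyapunov W u H A P β ρ xs lamh x lam :=
  add_nonneg (primalEnergy_nonneg hβ hα hPhat _)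
    (mul_nonneg (by positivity) (dotProduct_self_nonneg _))

variable (H A) in
noncomputable def lagrangian (b : Fin p → ℝ) (g : ∀ i : Fin m, (Fin (n i) → ℝ) → ℝ)
    (lam : Fin p → ℝ) (x : ∀ i : Fin m, Fin (n i) → ℝ) : ℝ :=
  Fobj H g x - lam ⬝ᵥ (blkMulVec A x - b)

lemma lagrangian_sub_le_lyapunov_sub {b : Fin p → ℝ} {g : ∀ i : Fin m, (Fin (n i) → ℝ) → ℝ}
    (hg : ∀ i, ConvexOn ℝ Set.univ (g i)) (hU : ∀ i j : Fin m, W i j - u j = W j i - u i)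
    {α ρ : ℝ} (hρ : 0 < ρ) (hβρ : ρ ≤ β) (hα : 1 ≤ α)
    (hPhat : PhatNonneg W u H A P β α)
    {xs : ∀ i : Fin m, Fin (n i) → ℝ} (hxs : blkMulVec A xs = b)
    {x₀ x₁ : ∀ i : Fin m, Fin (n i) → ℝ} {lam₀ lam₁ : Fin p → ℝ}
    (hit : Iter H A b g P W β ρ x₀ x₁ lam₀ lam₁) (lamh : Fin p → ℝ) :
    lagrangian H A b g lamh x₁ - Fobj H g xs
      ≤ (lyapunov W u H A P β ρ xs lamh x₀ lam₀ - lyapunov W u H A P β ρ xs lamh x₁ lam₁) / 2 := by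
  obtain ⟨hmin, rfl⟩ := hit
  have hres : blkMulVec A (x₁ - xs) = blkMulVec A x₁ - b := by rw [blkMulVec_sub, hxs]
  have hprox := Finset.sum_le_sum fun i (_ : i ∈ univ) =>
    prox_three_point (hg i) (hmin i) (xs i)
  have hgrad : ∀ i, ((H i)ᵀ *ᵥ blkMulVec H (xhat W x₀ x₁ i)
      - (A i)ᵀ *ᵥ (lam₀ - β • (blkMulVec A (xhat W x₀ x₁ i) - b))) ⬝ᵥ (x₁ i - xs i)
      = ((H i)ᵀ *ᵥ blkMulVec H (xhat W x₀ x₁ i)) ⬝ᵥ (x₁ i - xs i)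
        - ((A i)ᵀ *ᵥ lam₀) ⬝ᵥ (x₁ i - xs i)
        + β * (((A i)ᵀ *ᵥ (blkMulVec A (xhat W x₀ x₁ i) - b)) ⬝ᵥ (x₁ i - xs i)) := fun i => by
    simp only [mulVec_sub, mulVec_smul, sub_dotProduct, smul_dotProduct, smul_eq_mul]
    ring
  simp only [Finset.sum_add_distrib, Finset.sum_sub_distrib, hgrad, ← Finset.mul_sum,
    sum_transpose_mulVec_dotProduct_sub, ← Finset.sum_div] at hprox
  rw [hxs] at hprox
  have hH := sum_transpose_mulVec_xhat_dotProduct_ge W u hU H 0 x₀ x₁ xs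
  simp only [sub_zero] at hH
  have hA := sum_transpose_mulVec_xhat_dotProduct_ge W u hU A b x₀ x₁ xs
  rw [hres] at hA
  have hβ : 0 ≤ β := hρ.le.trans hβρ
  have hAβ := mul_le_mul_of_nonneg_left hA hβ
  have hF := Fobj_sub_Fobj H g x₁ xs
  have hdual := dotProduct_eq_dual_update hρ.ne' lam₀ lamh (blkMulVec A x₁ - b)
  have hP := normVSq_add_le_normPSq hβ hα hPhat (x₁ - x₀)
  have hβres : 0 ≤ (β - ρ) * ((blkMulVec A x₁ - b) ⬝ᵥ (blkMulVec A x₁ - b)) :=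
    mul_nonneg (sub_nonneg.2 hβρ) (dotProduct_self_nonneg (blkMulVec A x₁ - b))
  simp only [lyapunov, primalEnergy, lagrangian, normPSq, Pi.sub_apply] at hP ⊢
  linarith

variable (H A) in
lemma convexOn_Fobj {g : ∀ i : Fin m, (Fin (n i) → ℝ) → ℝ}
    (hg : ∀ i, ConvexOn ℝ Set.univ (g i)) : ConvexOn ℝ Set.univ (Fobj H g) := by
  have hq := (convexOn_dotProduct_self.comp_linearMap (blkMulVecLin H)).smul
    (show (0 : ℝ) ≤ 1 / 2 by norm_num)
  have hsum := convexOn_fun_sum convex_univ univ fun i _ =>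
    (hg i).comp_linearMap (LinearMap.proj (R := ℝ) (φ := fun i => Fin (n i) → ℝ) i)
  have hF : Fobj H g = fun x => (1 / 2 : ℝ) • ((fun v => v ⬝ᵥ v) ∘ blkMulVecLin H) x
      + ∑ i, (g i ∘ LinearMap.proj (R := ℝ) i) x := by
    funext x
    simp [Fobj, blkMulVecLin_apply]
  rw [hF]
  exact hq.add hsum

variable (H A) in
lemma convexOn_lagrangian (b : Fin p → ℝ) {g : ∀ i : Fin m, (Fin (n i) → ℝ) → ℝ}
    (hg : ∀ i, ConvexOn ℝ Set.univ (g i)) (lam : Fin p → ℝ) :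
    ConvexOn ℝ Set.univ (lagrangian H A b g lam) := by
  have haff := ((dotProductBilin ℝ ℝ lam) ∘ₗ blkMulVecLin A).concaveOn convex_univ
    |>.add_const (-(lam ⬝ᵥ b))
  have hL : lagrangian H A b g lam
      = Fobj H g - (⇑((dotProductBilin ℝ ℝ lam) ∘ₗ blkMulVecLin A) + fun _ => -(lam ⬝ᵥ b)) := by
    funext x
    simp [lagrangian, blkMulVecLin_apply, sub_eq_add_neg]
  rw [hL]
  exact (convexOn_Fobj H hg).sub haff

lemma lagrangian_average_sub_le {b : Fin p → ℝ} {g : ∀ i : Fin m, (Fin (n i) → ℝ) → ℝ}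
    (hg : ∀ i, ConvexOn ℝ Set.univ (g i)) (hU : ∀ i j : Fin m, W i j - u j = W j i - u i)
    {α ρ : ℝ} (hρ : 0 < ρ) (hβρ : ρ ≤ β) (hα : 1 ≤ α)
    (hPhat : PhatNonneg W u H A P β α)
    {xs : ∀ i : Fin m, Fin (n i) → ℝ} (hxs : blkMulVec A xs = b)
    {x : ℕ → ∀ i : Fin m, Fin (n i) → ℝ} {lam : ℕ → Fin p → ℝ}
    (hiter : ∀ k : ℕ, 1 ≤ k → Iter H A b g P W β ρ (x k) (x (k + 1)) (lam k) (lam (k + 1)))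
    {t : ℕ} (ht : 1 ≤ t) (lamh : Fin p → ℝ) :
    lagrangian H A b g lamh (fun i => (1 / (t : ℝ)) • ∑ k ∈ Icc 1 t, x (k + 1) i) - Fobj H g xs
      ≤ lyapunov W u H A P β ρ xs lamh (x 1) (lam 1) / (2 * t) := by
  set Φ := fun k => lyapunov W u H A P β ρ xs lamh (x k) (lam k)
  have htpos : (0 : ℝ) < t := by exact_mod_cast ht
  have hcard : ((Icc 1 t).card : ℝ) = t := by simp
  have hmean : (fun i => (1 / (t : ℝ)) • ∑ k ∈ Icc 1 t, x (k + 1) i)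
      = ∑ k ∈ Icc 1 t, (1 / (t : ℝ)) • x (k + 1) := by
    funext i
    simp only [Finset.smul_sum, Finset.sum_apply, Pi.smul_apply]
  have hJensen := (convexOn_lagrangian H A b hg lamh).map_sum_le (t := Icc 1 t)
    (w := fun _ => 1 / (t : ℝ)) (p := fun k => x (k + 1)) (fun _ _ => by positivity)
    (by rw [Finset.sum_const, nsmul_eq_mul, hcard]; field_simp) (fun _ _ => Set.mem_univ _)
  set L := lagrangian H A b g lamh
  have hstep : ∀ k ∈ Icc 1 t, L (x (k + 1)) - Fobj H g xs ≤ (Φ k - Φ (k + 1)) / 2 :=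
    fun k hk => lagrangian_sub_le_lyapunov_sub hg hU hρ hβρ hα hPhat hxs
      (hiter k (Finset.mem_Icc.1 hk).1) lamh
  have htel : ∑ k ∈ Icc 1 t, (Φ k - Φ (k + 1)) = Φ 1 - Φ (t + 1) := by
    have h := Finset.sum_Icc_sub (M := ℝ) ht (fun k => -Φ k)
    simp only [sub_neg_eq_add, neg_add_eq_sub] at h
    linarith
  have hΦ : 0 ≤ Φ (t + 1) := lyapunov_nonneg (hρ.le.trans hβρ) hα hρ.le hPhat _ _ _ _
  calc L (fun i => (1 / (t : ℝ)) • ∑ k ∈ Icc 1 t, x (k + 1) i) - Fobj H g xs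
      ≤ 1 / t * ∑ k ∈ Icc 1 t, (L (x (k + 1)) - Fobj H g xs) := by
        rw [hmean]
        refine (sub_le_sub_right hJensen _).trans (le_of_eq ?_)
        rw [Finset.sum_sub_distrib, Finset.sum_const, nsmul_eq_mul, hcard, mul_sub,
          Finset.mul_sum]
        simp only [smul_eq_mul]
        field_simp
    _ ≤ 1 / t * ∑ k ∈ Icc 1 t, (Φ k - Φ (k + 1)) / 2 := by gcongr with k hk; exact hstep k hk
    _ = (Φ 1 - Φ (t + 1)) / (2 * t) := by rw [← Finset.sum_div, htel]; field_simp
    _ ≤ Φ 1 / (2 * t) := by gcongr; linarith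

end Iteration

lemma add_mul_enormE_le_of_forall_sub_dotProduct_le {r : ℕ} {D c₀ ρ s : ℝ} (hρ : 0 ≤ ρ)
    (hs : 0 ≤ s) {v : Fin r → ℝ}
    (h : ∀ lam : Fin r → ℝ, D - lam ⬝ᵥ v ≤ (c₀ + 1 / ρ * (lam ⬝ᵥ lam)) / s)
    (c : ℝ) :
    D + c * enormE v ≤ (c₀ + 1 / ρ * c ^ 2) / s := by
  rcases (Real.sqrt_nonneg (v ⬝ᵥ v)).eq_or_lt with hv | hv
  · have h0 := h 0
    simp only [zero_dotProduct, mul_zero, add_zero, sub_zero] at h0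
    rw [enormE, ← hv, mul_zero, add_zero]
    exact h0.trans (div_le_div_of_nonneg_right (le_add_of_nonneg_right (by positivity)) hs)
  · -- the dual point `-(c/‖v‖) v` realizes `⟨λ, v⟩ = -c‖v‖` and `‖λ‖ = c`
    have hv' : enormE v ≠ 0 := hv.ne'
    have h1 := h (-(c / enormE v) • v)
    rw [neg_smul, neg_dotProduct, smul_dotProduct, neg_dotProduct, dotProduct_neg, neg_neg,
      smul_dotProduct, dotProduct_smul, ← enormE_sq, smul_eq_mul, smul_eq_mul] at h1
    have e1 : c / enormE v * enormE v ^ 2 = c * enormE v := by field_simp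
    have e2 : c / enormE v * (c * enormE v) = c ^ 2 := by field_simp
    rw [e1, e2] at h1
    linarith

lemma abs_le_and_le_of_forall_add_mul_le {D ν L c₀ ρ s : ℝ} (hL : 0 ≤ L) (hρ : 0 ≤ ρ)
    (hs : 0 ≤ s) (hlow : -(L * ν) ≤ D)
    (h : ∀ c : ℝ, 0 ≤ c → D + c * ν ≤ (c₀ + 1 / ρ * c ^ 2) / s) :
    |D| ≤ (1 / ρ * max ((1 + L) ^ 2) (4 * L ^ 2) + c₀) / s
      ∧ ν ≤ (1 / ρ * max ((1 + L) ^ 2) (4 * L ^ 2) + c₀) / s := by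
  have hmono : ∀ c : ℝ, 0 ≤ c → c ^ 2 ≤ max ((1 + L) ^ 2) (4 * L ^ 2) →
      D + c * ν ≤ (1 / ρ * max ((1 + L) ^ 2) (4 * L ^ 2) + c₀) / s := fun c hc hcM =>
    (h c hc).trans (by rw [add_comm c₀]; gcongr)
  have h0 := hmono 0 le_rfl (le_max_of_le_left (by nlinarith))
  have h1 := hmono (1 + L) (by positivity) (le_max_left _ _)
  have h2 := hmono (2 * L) (by positivity) (by rw [mul_pow]; norm_num)
  refine ⟨abs_le.2 ⟨by linarith, by linarith⟩, by linarith⟩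

theorem stmt_11_general {m q p : ℕ} {n : Fin m → ℕ}
    (H : ∀ i : Fin m, Matrix (Fin q) (Fin (n i)) ℝ)
    (A : ∀ i : Fin m, Matrix (Fin p) (Fin (n i)) ℝ)
    (b : Fin p → ℝ)
    (g : ∀ i : Fin m, (Fin (n i) → ℝ) → ℝ)
    (hg : ∀ i : Fin m, ConvexOn ℝ Set.univ (g i))
    (P : ∀ i : Fin m, Matrix (Fin (n i)) (Fin (n i)) ℝ)
    (W : Matrix (Fin m) (Fin m) ℝ) (u : Fin m → ℝ)
    (hU : ∀ i j : Fin m, W i j - u j = W j i - u i)       -- U := W − euᵀ symmetric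
    (β ρ α : ℝ) (hρ : 0 < ρ) (hβρ : ρ ≤ β) (hα : 1 ≤ α)
    (x : ℕ → ∀ i : Fin m, Fin (n i) → ℝ) (lam : ℕ → Fin p → ℝ)
    (hiter : ∀ k : ℕ, 1 ≤ k →
      Iter H A b g P W β ρ (x k) (x (k + 1)) (lam k) (lam (k + 1)))
    (hlam1 : lam 1 = 0)
    (Mhat : Matrix (Fin m) (Fin m) ℝ)
    (hM : Mhat = fun i j => W i j - u j + α * (u i * u j))
    -- P̂ := P − D_Hᵀ(M ⊗ I)D_H − β D_Aᵀ(M ⊗ I)D_A is positive semidefinite: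
    (hPhat : ∀ v : ∀ i : Fin m, Fin (n i) → ℝ,
      0 ≤ normPSq P v - quadKron Mhat H v - β * quadKron Mhat A v)
    -- (x*, λ*) satisfies the KKT conditions:
    (xstar : ∀ i : Fin m, Fin (n i) → ℝ) (lamstar : Fin p → ℝ)
    (hkkt1 : blkMulVec A xstar = b)
    (hkkt2 : ∀ xx : ∀ i : Fin m, Fin (n i) → ℝ,
      Fobj H g xstar + ∑ i, ((A i)ᵀ *ᵥ lamstar) ⬝ᵥ (xx i - xstar i) ≤ Fobj H g xx)
    (C : ℝ)
    (hC : C = (1 / ρ) * max ((1 + enormE lamstar) ^ 2) (4 * enormE lamstar ^ 2)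
        + normPSq P (x 1 - xstar)
        - normVSq W u ((fun i => H i *ᵥ (x 1) i) - fun i => H i *ᵥ xstar i)
        - β * normVSq W u ((fun i => A i *ᵥ (x 1) i) - fun i => A i *ᵥ xstar i)) :
    ∀ t : ℕ, 1 ≤ t →
      ∀ xbar : ∀ i : Fin m, Fin (n i) → ℝ,
        xbar = (fun i => (1 / (t : ℝ)) • ∑ k ∈ Finset.Icc 1 t, x (k + 1) i) →
        |Fobj H g xbar - Fobj H g xstar| ≤ C / (2 * t)
          ∧ enormE (blkMulVec A xbar - b) ≤ C / (2 * t) := by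
  intro t ht xbar hxbar
  subst hM
  have htpos : (0 : ℝ) < 2 * t := by positivity
  have hC' : C = 1 / ρ * max ((1 + enormE lamstar) ^ 2) (4 * enormE lamstar ^ 2)
      + primalEnergy W u H A P β (x 1 - xstar) := by
    rw [hC, primalEnergy, blkDiagMulVec_sub, blkDiagMulVec_sub]
    unfold blkDiagMulVec
    ring
  have hgap : ∀ lamh : Fin p → ℝ, Fobj H g xbar - Fobj H g xstar - lamh ⬝ᵥ (blkMulVec A xbar - b)
      ≤ (primalEnergy W u H A P β (x 1 - xstar) + 1 / ρ * (lamh ⬝ᵥ lamh)) / (2 * t) := by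
    intro lamh
    have h := lagrangian_average_sub_le hg hU hρ hβρ hα hPhat hkkt1 hiter ht lamh
    rw [← hxbar, lagrangian, lyapunov, hlam1, zero_sub, neg_dotProduct, dotProduct_neg, neg_neg] at h
    linarith
  have hlow : -(enormE lamstar * enormE (blkMulVec A xbar - b)) ≤ Fobj H g xbar - Fobj H g xstar := by
    have h := hkkt2 xbar
    rw [sum_transpose_mulVec_dotProduct_sub, hkkt1] at h
    linarith [neg_enormE_mul_le_dotProduct lamstar (blkMulVec A xbar - b)]
  rw [hC']
  exact abs_le_and_le_of_forall_add_mul_le (Real.sqrt_nonneg _) hρ.le htpos.le hlow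
    fun c _ => add_mul_enormE_le_of_forall_sub_dotProduct_le hρ.le htpos.le hgap c

/-- Theorem 1 (sublinear convergence rate), estimates (20). -/
theorem stmt_11 {m q p : ℕ} {n : Fin m → ℕ}
    (H : ∀ i : Fin m, Matrix (Fin q) (Fin (n i)) ℝ)
    (A : ∀ i : Fin m, Matrix (Fin p) (Fin (n i)) ℝ)
    (b : Fin p → ℝ)
    (g : ∀ i : Fin m, (Fin (n i) → ℝ) → ℝ)
    (hg : ∀ i : Fin m, ConvexOn ℝ Set.univ (g i))
    (P : ∀ i : Fin m, Matrix (Fin (n i)) (Fin (n i)) ℝ)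
    (hP : ∀ i : Fin m, (P i).PosSemidef)
    (W : Matrix (Fin m) (Fin m) ℝ) (u : Fin m → ℝ)
    (hW : ∀ i j : Fin m, i ≤ j → W i j = 1)              -- w_{ij} = 1 for j ≥ i
    (hU : ∀ i j : Fin m, W i j - u j = W j i - u i)       -- U := W − euᵀ symmetric
    (β ρ α : ℝ) (hρ : 0 < ρ) (hβρ : ρ ≤ β) (hα : 1 ≤ α)
    (x : ℕ → ∀ i : Fin m, Fin (n i) → ℝ) (lam : ℕ → Fin p → ℝ)
    (hiter : ∀ k : ℕ, 1 ≤ k →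
      Iter H A b g P W β ρ (x k) (x (k + 1)) (lam k) (lam (k + 1)))
    (hlam1 : lam 1 = 0)
    (Mhat : Matrix (Fin m) (Fin m) ℝ)
    (hM : Mhat = fun i j => W i j - u j + α * (u i * u j))
    -- P̂ := P − D_Hᵀ(M ⊗ I)D_H − β D_Aᵀ(M ⊗ I)D_A is positive semidefinite:
    (hPhat : ∀ v : ∀ i : Fin m, Fin (n i) → ℝ,
      0 ≤ normPSq P v - quadKron Mhat H v - β * quadKron Mhat A v)
    -- (x*, λ*) satisfies the KKT conditions:
    (xstar : ∀ i : Fin m, Fin (n i) → ℝ) (lamstar : Fin p → ℝ)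
    (hkkt1 : blkMulVec A xstar = b)
    (hkkt2 : ∀ xx : ∀ i : Fin m, Fin (n i) → ℝ,
      Fobj H g xstar + ∑ i, ((A i)ᵀ *ᵥ lamstar) ⬝ᵥ (xx i - xstar i) ≤ Fobj H g xx)
    (C : ℝ)
    (hC : C = (1 / ρ) * max ((1 + enormE lamstar) ^ 2) (4 * enormE lamstar ^ 2)
        + normPSq P (x 1 - xstar)
        - normVSq W u ((fun i => H i *ᵥ (x 1) i) - fun i => H i *ᵥ xstar i)
        - β * normVSq W u ((fun i => A i *ᵥ (x 1) i) - fun i => A i *ᵥ xstar i)) :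
    ∀ t : ℕ, 1 ≤ t →
      ∀ xbar : ∀ i : Fin m, Fin (n i) → ℝ,
        xbar = (fun i => (1 / (t : ℝ)) • ∑ k ∈ Finset.Icc 1 t, x (k + 1) i) →
        |Fobj H g xbar - Fobj H g xstar| ≤ C / (2 * t)
          ∧ enormE (blkMulVec A xbar - b) ≤ C / (2 * t) :=
  stmt_11_general H A b g hg P W u hU β ρ α hρ hβρ hα x lam hiter hlam1 Mhat hM hPhat xstar lamstar
    hkkt1 hkkt2 C hC
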